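/- Let (a_n)_{n≥0} be a sequence of real numbers, let k be a positive integer, α ∈ ℝ and β > 1, and suppose there is a sequence (r_n) with r_n → 0 such that a_n = α + (2/(n−k+1))·Σ_{j=0}^{n−k} (j/n)^β·a_j + r_n for all n ≥ k. Then sup_{n≥0} |a_n| < ∞. -/

import Mathlib

open Filter Finset
open scoped Topology

/-!
Comparing with `∫₀^{m+1} x^β dx` gives `∑_{j ≤ m} (j/n)^β ≤ (m+1)/(β+1)` whenever `m < n`, so the
averaging term of the recursion is at most `ρ := 2/(β+1) < 1` times any bound on the earlier terms.
With `|r n| ≤ R`, strong induction then keeps `|a n|` below any `C` exceeding both the first `k`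
terms and `(|α| + R)/(1 - ρ)`.
-/

lemma sum_range_natCast_rpow_le {β : ℝ} (hβ : 0 ≤ β) (m : ℕ) :
    ∑ j ∈ range m, (j : ℝ) ^ β ≤ (m : ℝ) ^ (β + 1) / (β + 1) := by
  have hmono : MonotoneOn (fun x : ℝ => x ^ β) (Set.Icc 0 (0 + m)) :=
    fun x hx y _ hxy => Real.rpow_le_rpow hx.1 hxy hβ
  have hint : ∫ x in (0 : ℝ)..m, x ^ β = (m : ℝ) ^ (β + 1) / (β + 1) := by
    rw [integral_rpow (Or.inl (by linarith)), Real.zero_rpow (by linarith), sub_zero]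
  simpa [hint] using hmono.sum_le_integral

lemma sum_range_div_rpow_le {β : ℝ} (hβ : 0 ≤ β) {m n : ℕ} (hmn : m ≤ n) :
    ∑ j ∈ range m, ((j : ℝ) / n) ^ β ≤ m / (β + 1) := by
  rcases m.eq_zero_or_pos with rfl | hm
  · simp
  have hn : (0 : ℝ) < n := by exact_mod_cast hm.trans_le hmn
  have hmn' : (m : ℝ) ^ β ≤ (n : ℝ) ^ β :=
    Real.rpow_le_rpow (by positivity) (by exact_mod_cast hmn) hβ
  calc ∑ j ∈ range m, ((j : ℝ) / n) ^ β
      = (∑ j ∈ range m, (j : ℝ) ^ β) / (n : ℝ) ^ β := by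
        rw [sum_div]
        exact sum_congr rfl fun j _ => Real.div_rpow (by positivity) hn.le β
    _ ≤ (m : ℝ) ^ (β + 1) / (β + 1) / (n : ℝ) ^ β := by
        gcongr
        exact sum_range_natCast_rpow_le hβ m
    _ = (m : ℝ) ^ β / (n : ℝ) ^ β * (m / (β + 1)) := by
        rw [Real.rpow_add_one (by positivity)]
        ring
    _ ≤ m / (β + 1) := by
        apply mul_le_of_le_one_left (by positivity)
        exact div_le_one_of_le₀ hmn' (by positivity)

lemma abs_sum_mul_le_of_abs_le {ι : Type*} {s : Finset ι} {w x : ι → ℝ} {C : ℝ}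
    (hw : ∀ i ∈ s, 0 ≤ w i) (hx : ∀ i ∈ s, |x i| ≤ C) :
    |∑ i ∈ s, w i * x i| ≤ (∑ i ∈ s, w i) * C :=
  calc |∑ i ∈ s, w i * x i| ≤ ∑ i ∈ s, |w i * x i| := abs_sum_le_sum_abs _ _
    _ ≤ ∑ i ∈ s, w i * C := sum_le_sum fun i hi => by
        rw [abs_mul, abs_of_nonneg (hw i hi)]
        exact mul_le_mul_of_nonneg_left (hx i hi) (hw i hi)
    _ = (∑ i ∈ s, w i) * C := (sum_mul _ _ _).symm

lemma abs_two_div_mul_sum_div_rpow_mul_le {β : ℝ} (hβ : 0 ≤ β) {a : ℕ → ℝ} {C : ℝ}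
    (hC : 0 ≤ C) {m n : ℕ} (hmn : m + 1 ≤ n) (ha : ∀ j ≤ m, |a j| ≤ C) :
    |2 / ((m : ℝ) + 1) * ∑ j ∈ range (m + 1), ((j : ℝ) / n) ^ β * a j| ≤ 2 / (β + 1) * C := by
  have hsum := abs_sum_mul_le_of_abs_le (s := range (m + 1)) (w := fun j => ((j : ℝ) / n) ^ β)
    (fun j _ => by positivity) (fun j hj => ha j (Nat.lt_succ_iff.mp (mem_range.mp hj)))
  have hweights := sum_range_div_rpow_le hβ hmn
  push_cast at hweights
  calc |2 / ((m : ℝ) + 1) * ∑ j ∈ range (m + 1), ((j : ℝ) / n) ^ β * a j|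
      ≤ 2 / ((m : ℝ) + 1) * (((m : ℝ) + 1) / (β + 1) * C) := by
        rw [abs_mul, abs_of_pos (by positivity)]
        gcongr
        exact hsum.trans (mul_le_mul_of_nonneg_right hweights hC)
    _ = 2 / (β + 1) * C := by field_simp

lemma exists_forall_abs_le_of_abs_le_add_mul {a : ℕ → ℝ} {k : ℕ} {B ρ : ℝ} (hρ : ρ < 1)
    (h : ∀ n ≥ k, ∀ C, 0 ≤ C → (∀ j < n, |a j| ≤ C) → |a n| ≤ B + ρ * C) :
    ∃ C, ∀ n, |a n| ≤ C := by
  set C := max (∑ j ∈ range k, |a j|) (B / (1 - ρ))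
  have hC : 0 ≤ C := le_max_of_le_left (sum_nonneg fun j _ => abs_nonneg _)
  have hBC : B + ρ * C ≤ C := by
    have := (div_le_iff₀ (sub_pos.mpr hρ)).mp (le_max_right (∑ j ∈ range k, |a j|) (B / (1 - ρ)))
    linarith
  refine ⟨C, fun n => ?_⟩
  induction n using Nat.strong_induction_on with
  | _ n ih =>
    rcases lt_or_ge n k with hn | hn
    · exact le_max_of_le_left <|
        single_le_sum (fun j _ => abs_nonneg (a j)) (mem_range.mpr hn)
    · exact (h n hn C hC ih).trans hBC

/-- If `a_n = α + (2/(n-k+1)) Σ_{j=0}^{n-k} (j/n)^β a_j + o(1)` with `β > 1`,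
then `sup_n |a_n| < ∞`. -/
theorem seq_abs_bounded_of_recursion
    (a : ℕ → ℝ) (k : ℕ) (hk : 0 < k) (α β : ℝ) (hβ : 1 < β)
    (r : ℕ → ℝ) (hr : Tendsto r atTop (𝓝 0))
    (h : ∀ n : ℕ, k ≤ n →
      a n = α + (2 / ((n : ℝ) - (k : ℝ) + 1)) *
        ∑ j ∈ Finset.range (n - k + 1), ((j : ℝ) / (n : ℝ)) ^ β * a j + r n) :
    ∃ C : ℝ, ∀ n, |a n| ≤ C := by
  obtain ⟨R, hR⟩ := hr.abs.bddAbove_range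
  have hρ : 2 / (β + 1) < 1 := by rw [div_lt_one (by linarith)]; linarith
  refine exists_forall_abs_le_of_abs_le_add_mul (k := k) (B := |α| + R) hρ fun n hn C hC ha => ?_
  have hcast : (n : ℝ) - k + 1 = ((n - k : ℕ) : ℝ) + 1 := by push_cast [Nat.cast_sub hn]; ring
  have hterm := abs_two_div_mul_sum_div_rpow_mul_le (β := β) (by linarith) hC (m := n - k) (n := n)
    (by omega) fun j hj => ha j (by omega)
  rw [h n hn, hcast]
  have hrn : |r n| ≤ R := hR ⟨n, rfl⟩
  calc _ ≤ |α| + |2 / (((n - k : ℕ) : ℝ) + 1) *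
        ∑ j ∈ range (n - k + 1), ((j : ℝ) / n) ^ β * a j| + |r n| :=
        (abs_add_le _ _).trans (add_le_add_left (abs_add_le _ _) _)
    _ ≤ |α| + R + 2 / (β + 1) * C := by linarith
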